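/- Let A be an affine invariant set mapping on 𝒦ₙ. Then there exists c > 0 such that c(K − g(K)) ⊆ A(K) − g(A(K)) for every K ∈ 𝒦ₙ. -/

import Mathlib

open scoped Pointwise
open MeasureTheory

noncomputable section

/-- Euclidean space `ℝⁿ`. -/
abbrev EucSp (n : ℕ) := EuclideanSpace ℝ (Fin n)

/-- The space `𝒦ₙ` of convex bodies in `ℝⁿ`: compact convex sets with nonempty interior,
equipped (as a subtype of `ConvexBody`) with the Hausdorff metric. -/
def Kn (n : ℕ) : Type :=
  {K : ConvexBody (EucSp n) // (interior (K : Set (EucSp n))).Nonempty}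

noncomputable instance (n : ℕ) : MetricSpace (Kn n) :=
  Subtype.metricSpace

/-- The underlying set of a convex body in `𝒦ₙ`. -/
def Kn.toSet {n : ℕ} (K : Kn n) : Set (EucSp n) := (K.1 : Set (EucSp n))

/-- An affine equivalence of `ℝⁿ` as a homeomorphism. -/
def affEquivHomeo {n : ℕ} (T : EucSp n ≃ᵃ[ℝ] EucSp n) : EucSp n ≃ₜ EucSp n where
  toEquiv := T.toEquiv
  continuous_toFun := T.toAffineMap.continuous_of_finiteDimensional
  continuous_invFun := T.symm.toAffineMap.continuous_of_finiteDimensional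

/-- The image of a convex body under an invertible affine map, as a convex body. -/
def affImage {n : ℕ} (T : EucSp n ≃ᵃ[ℝ] EucSp n) (K : Kn n) : Kn n :=
  ⟨⟨(T : EucSp n → EucSp n) '' K.toSet,
    (K.1.convex.affine_image T.toAffineMap : Convex ℝ ((T : EucSp n → EucSp n) '' K.toSet)),
    K.1.isCompact.image (affEquivHomeo T).continuous,
    K.1.nonempty.image _⟩,
    by
      obtain ⟨x, hx⟩ := K.2
      exact ⟨T x, ((affEquivHomeo T).image_interior (K.1 : Set (EucSp n))) ▸
        Set.mem_image_of_mem _ hx⟩⟩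

/-- An affine invariant point: a continuous map `p : 𝒦ₙ → ℝⁿ` such that
`p (T K) = T (p K)` for every invertible affine map `T`. -/
def IsAffineInvariantPoint {n : ℕ} (p : Kn n → EucSp n) : Prop :=
  Continuous p ∧ ∀ (T : EucSp n ≃ᵃ[ℝ] EucSp n) (K : Kn n), p (affImage T K) = T (p K)

/-- An affine invariant set mapping: a continuous map `A : 𝒦ₙ → 𝒦ₙ` such that
`A (T K) = T (A K)` for every invertible affine map `T`. -/
def IsAffineInvariantSetMap {n : ℕ} (A : Kn n → Kn n) : Prop :=
  Continuous A ∧ ∀ (T : EucSp n ≃ᵃ[ℝ] EucSp n) (K : Kn n), A (affImage T K) = affImage T (A K)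

/-- The centroid `g(S) = (∫_S x dx) / vol(S)` of a set `S ⊆ ℝⁿ`. -/
def centroid {n : ℕ} (S : Set (EucSp n)) : EucSp n :=
  (volume S).toReal⁻¹ • ∫ x in S, x

/-- `𝔓ₙ(K) = {p(K) : p ∈ 𝔓ₙ}`. -/
def PnSet (n : ℕ) (K : Kn n) : Set (EucSp n) :=
  {x | ∃ p : Kn n → EucSp n, IsAffineInvariantPoint p ∧ p K = x}

end

/-!
Replacing `K` by `T K` for an affine map `T` replaces both `K - g(K)` and `A(K) - g(A(K))` by
their images under the linear part of `T`, so it suffices to prove the inclusion for one affine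
image of each body. Sending a simplex of maximal volume inscribed in `K` to the standard corner
simplex puts `K` between that simplex and the unit cube, and these normalized bodies form a
compact subset of `𝒦ₙ`. The centroid lies in the interior of a body and depends continuously on
it, so by continuity of `A` the inradius of `A(K)` about `g(A(K))` is bounded below uniformly
over normalized `K`, while `K - g(K)` stays in a fixed ball.
-/

open Metric Set Filter Topology
open scoped RealInnerProductSpace

section HilbertSpace

variable {E : Type*} [NormedAddCommGroup E] [InnerProductSpace ℝ E] [CompleteSpace E]

theorem exists_norm_eq_one_inner_lt_of_notMem {C : Set E} (hC : Convex ℝ C)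
    (hCc : IsClosed C) (hCne : C.Nonempty) {z : E} (hz : z ∉ C) :
    ∃ u : E, ‖u‖ = 1 ∧ ∀ w ∈ C, ⟪u, w⟫ < ⟪u, z⟫ := by
  obtain ⟨f, a, hfC, hfz⟩ := geometric_hahn_banach_closed_point hC hCc hz
  set v := (InnerProductSpace.toDual ℝ E).symm f
  have hv : ∀ x, ⟪v, x⟫ = f x := fun x => InnerProductSpace.toDual_symm_apply
  have hv0 : v ≠ 0 := by
    rintro hv0
    obtain ⟨w, hw⟩ := hCne
    have h1 := hfC w hw
    have h2 := hfz
    rw [← hv, hv0, inner_zero_left] at h1 h2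
    linarith
  refine ⟨‖v‖⁻¹ • v, norm_smul_inv_norm hv0, fun w hw => ?_⟩
  rw [real_inner_smul_left, real_inner_smul_left, hv, hv]
  exact mul_lt_mul_of_pos_left ((hfC w hw).trans hfz) (inv_pos.2 (norm_pos_iff.2 hv0))

theorem ball_subset_of_hausdorffDist_le {C D : Set E} (hC : Convex ℝ C) (hCc : IsClosed C)
    (hCne : C.Nonempty) (hfin : hausdorffEDist D C ≠ ⊤) {ε : ℝ}
    (hDC : hausdorffDist D C ≤ ε) {y : E} {δ : ℝ} (hball : ball y δ ⊆ D) :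
    ball y (δ - ε) ⊆ C := by
  intro z hz
  by_contra hzC
  obtain ⟨u, hu1, hu⟩ := exists_norm_eq_one_inner_lt_of_notMem hC hCc hCne hzC
  have hε : 0 ≤ ε := hausdorffDist_nonneg.trans hDC
  obtain ⟨t, hzt, htδ⟩ := exists_between (lt_sub_iff_add_lt'.1 (mem_ball.1 hz))
  have ht : 0 < t := (add_nonneg hε dist_nonneg).trans_lt hzt
  have hq : y + t • u ∈ D := hball <| by
    rwa [mem_ball, dist_eq_norm, add_sub_cancel_left, norm_smul, hu1, mul_one,
      Real.norm_of_nonneg ht.le]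
  have hfar : t - dist z y ≤ infDist (y + t • u) C := by
    refine (le_infDist hCne).2 fun w hw => ?_
    have h1 : ⟪u, y + t • u - w⟫ ≤ dist (y + t • u) w := by
      simpa [hu1, dist_eq_norm] using real_inner_le_norm u (y + t • u - w)
    have h2 : ⟪u, z - y⟫ ≤ dist z y := by
      simpa [hu1, dist_eq_norm] using real_inner_le_norm u (z - y)
    have h3 := hu w hw
    simp only [inner_sub_right, inner_add_right, real_inner_smul_right,
      real_inner_self_eq_norm_sq, hu1] at h1 h2
    nlinarith
  linarith [infDist_le_hausdorffDist_of_mem hq hfin]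

end HilbertSpace

section NonemptyCompacts

open TopologicalSpace

variable {E : Type*} [NormedAddCommGroup E] [NormedSpace ℝ E]

theorem TopologicalSpace.NonemptyCompacts.isClosed_setOf_convex :
    IsClosed {L : NonemptyCompacts E | Convex ℝ (L : Set E)} := by
  refine isClosed_of_closure_subset fun L hL a ha b hb s t hs ht hst => ?_
  rw [← L.isCompact.isClosed.closure_eq, Metric.mem_closure_iff]
  intro ε hε
  obtain ⟨M, hM, hLM⟩ := Metric.mem_closure_iff.1 hL (ε / 2) (by positivity)
  rw [NonemptyCompacts.dist_eq] at hLM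
  have hfin : hausdorffEDist (L : Set E) M ≠ ⊤ :=
    hausdorffEDist_ne_top_of_nonempty_of_bounded L.nonempty M.nonempty L.isCompact.isBounded
      M.isCompact.isBounded
  have hthick : ∀ x ∈ (L : Set E), x ∈ thickening (ε / 2) (M : Set E) := fun x hx =>
    mem_thickening_iff.2 (exists_dist_lt_of_hausdorffDist_lt hx hLM hfin)
  obtain ⟨c, hcM, hc⟩ := mem_thickening_iff.1 <|
    (Convex.thickening hM (ε / 2)) (hthick a ha) (hthick b hb) hs ht hst
  rw [hausdorffDist_comm] at hLM
  obtain ⟨d, hdL, hd⟩ := exists_dist_lt_of_hausdorffDist_lt hcM hLM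
    (by rwa [hausdorffEDist_comm])
  exact ⟨d, hdL, by linarith [dist_triangle (s • a + t • b) c d]⟩

end NonemptyCompacts

section Centroid

open MeasureTheory

variable {n : ℕ}

theorem centroid_eq_setAverage (S : Set (EucSp n)) : centroid S = ⨍ x in S, x := by
  rw [setAverage_eq]; rfl

theorem setIntegral_image_affineEquiv {F : Type*} [NormedAddCommGroup F] [NormedSpace ℝ F]
    (T : EucSp n ≃ᵃ[ℝ] EucSp n) {s : Set (EucSp n)} (hs : MeasurableSet s)
    (g : EucSp n → F) :
    ∫ x in T '' s, g x =
      |LinearMap.det (T.linear : EucSp n →ₗ[ℝ] EucSp n)| • ∫ x in s, g (T x) := by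
  have hT : ∀ x, HasFDerivAt T T.toContinuousAffineEquiv.toContinuousAffineMap.contLinear x :=
    fun _ => T.toContinuousAffineEquiv.toContinuousAffineMap.hasFDerivAt
  rw [integral_image_eq_integral_abs_det_fderiv_smul volume hs
    (fun x _ => (hT x).hasFDerivWithinAt) T.injective.injOn, integral_smul]
  rfl

theorem centroid_image_affineEquiv (T : EucSp n ≃ᵃ[ℝ] EucSp n) {s : Set (EucSp n)}
    (hs : MeasurableSet s) (hs0 : volume s ≠ 0) (hsfin : volume s ≠ ⊤)
    (hint : IntegrableOn (fun x => x) s) : centroid (T '' s) = T (centroid s) := by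
  set d := |LinearMap.det (T.linear : EucSp n →ₗ[ℝ] EucSp n)|
  have hd : d ≠ 0 := abs_ne_zero.2 (LinearEquiv.isUnit_det' T.linear).ne_zero
  have hvol : volume.real (T '' s) = d * volume.real s := by
    have h := setIntegral_image_affineEquiv T hs (fun _ => (1 : ℝ))
    rwa [setIntegral_const, setIntegral_const, smul_eq_mul, smul_eq_mul, smul_eq_mul,
      mul_one, mul_one] at h
  have hvs : volume.real s ≠ 0 := ENNReal.toReal_ne_zero.2 ⟨hs0, hsfin⟩
  have hTx : ∫ x in s, T x = T.linear (∫ x in s, x) + volume.real s • T 0 := by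
    have hL : ∀ x, T x = T.linear.toContinuousLinearMap x + T 0 := fun x =>
      congrFun T.toAffineMap.decomp x
    rw [show (fun x => T x) = fun x => T.linear.toContinuousLinearMap x + T 0 from funext hL,
      integral_add (T.linear.toContinuousLinearMap.integrable_comp hint) (integrableOn_const hsfin),
      ContinuousLinearMap.integral_comp_comm _ hint, setIntegral_const]
    rfl
  rw [centroid_eq_setAverage, centroid_eq_setAverage, setAverage_eq, setAverage_eq,
    setIntegral_image_affineEquiv T hs, hvol, hTx, smul_smul, mul_inv_rev, mul_assoc,
    inv_mul_cancel₀ hd, mul_one, smul_add, smul_smul, inv_mul_cancel₀ hvs, one_smul,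
    ← map_smul]
  exact (congrFun T.toAffineMap.decomp _).symm

theorem Convex.centroid_mem_interior {K : Set (EucSp n)} (hK : Convex ℝ K) (hKc : IsCompact K)
    (hKi : (interior K).Nonempty) : centroid K ∈ interior K := by
  obtain ⟨z, hz⟩ := hKi
  obtain ⟨ε, hε, hzK⟩ := Metric.isOpen_iff.1 isOpen_interior z hz
  have hsmall : Metric.ball z (ε / 2) ⊆ K := fun x hx =>
    interior_subset (hzK (Metric.ball_subset_ball (by linarith) hx))
  have hvol : volume.restrict K (Metric.ball z (ε / 2)) ≠ 0 := by
    rw [Measure.restrict_apply Metric.isOpen_ball.measurableSet, inter_eq_left.2 hsmall]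
    exact (measure_ball_pos volume z (by positivity)).ne'
  have : IsFiniteMeasure (volume.restrict K) := isFiniteMeasure_restrict.2 hKc.measure_lt_top.ne
  have hint : Integrable (fun x => x) (volume.restrict K) :=
    continuous_id.continuousOn.integrableOn_compact hKc
  rw [centroid_eq_setAverage]
  refine hK.average_mem_interior_of_set hvol (ae_restrict_mem hKc.isClosed.measurableSet) hint ?_
  have hmem := (convex_ball z (ε / 2)).set_average_mem_closure hvol (measure_ne_top _ _)
    (ae_restrict_mem Metric.isOpen_ball.measurableSet) hint.integrableOn
  exact hzK <| Metric.closedBall_subset_ball (by linarith) <|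
    Metric.closure_ball_subset_closedBall hmem

end Centroid

theorem Module.Basis.det_update_self {R M ι : Type*} [CommRing R] [AddCommGroup M] [Module R M]
    [Fintype ι] [DecidableEq ι] (b B : Module.Basis ι R M) (i : ι) (y : M) :
    b.det (Function.update B i y) = b.det B * B.coord i y := by
  have hB : Module.Basis.mk B.linearIndependent B.span_eq.ge = B :=
    Module.Basis.eq_of_apply_eq fun _ => Module.Basis.mk_apply _ _ _
  have h := LinearMap.congr_fun
    (b.det_smul_mk_coord_eq_det_update B.linearIndependent B.span_eq.ge i) y
  rw [hB] at h
  exact h.symm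

section SimplexEdges

variable {E ι : Type*} [AddCommGroup E]

def simplexEdges (v : Option ι → E) (i : ι) : E := v (some i) - v none

theorem simplexEdges_update_some [DecidableEq ι] (v : Option ι → E) (i : ι) (x : E) :
    simplexEdges (Function.update v (some i) x) =
      Function.update (simplexEdges v) i (x - v none) := by
  ext j
  rcases eq_or_ne j i with rfl | hj
  · simp [simplexEdges]
  · simp [simplexEdges, hj]

end SimplexEdges

section MaxVolumeSimplex

variable {E : Type*} [NormedAddCommGroup E] [NormedSpace ℝ E]
  {ι : Type*} [Fintype ι] [DecidableEq ι]

theorem exists_det_simplexEdges_ne_zero (b : Module.Basis ι ℝ E) {K : Set E}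
    (hK : (interior K).Nonempty) :
    ∃ v : Option ι → E, (∀ j, v j ∈ K) ∧ b.det (simplexEdges v) ≠ 0 := by
  obtain ⟨z, hz⟩ := hK
  have hnear : ∀ᶠ δ in 𝓝 (0 : ℝ), ∀ i, z + δ • b i ∈ K := by
    refine eventually_all.2 fun i => ?_
    have : Tendsto (fun δ : ℝ => z + δ • b i) (𝓝 0) (𝓝 z) :=
      (continuous_const.add (continuous_id.smul continuous_const)).tendsto' 0 z (by simp)
    exact this.eventually (mem_interior_iff_mem_nhds.1 hz)
  obtain ⟨δ, hδK, hδ⟩ := ((hnear.filter_mono nhdsWithin_le_nhds).and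
    (self_mem_nhdsWithin (s := {0}ᶜ))).exists
  refine ⟨fun j => j.elim z fun i => z + δ • b i, ?_, ?_⟩
  · rintro (_ | i)
    · exact interior_subset hz
    · exact hδK i
  · have : simplexEdges (fun j => j.elim z fun i => z + δ • b i) = fun i => δ • b i := by
      ext i; simp [simplexEdges]
    rw [this, b.det.map_smul_univ (fun _ => δ), b.det_self, smul_eq_mul, mul_one,
      Finset.prod_const]
    exact pow_ne_zero _ hδ

theorem Module.Basis.continuous_det [FiniteDimensional ℝ E] (b : Module.Basis ι ℝ E) :
    Continuous (b.det : (ι → E) → ℝ) := by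
  rw [show (b.det : (ι → E) → ℝ) = fun v => (b.toMatrix v).det from funext b.det_apply]
  exact Continuous.matrix_det <| continuous_matrix fun i j =>
    (b.coord i).continuous_of_finiteDimensional.comp (continuous_apply j)

/-- Sending the vertices of a simplex of maximal volume in `K` to `0` and to the basis vectors
puts `K` inside the unit cube of the basis: replacing the vertex `v (some i)` by `x ∈ K`
multiplies the volume by the `i`-th coordinate of the image of `x` (Cramer's rule). -/
theorem exists_affineEquiv_image_abs_coord_le_one [FiniteDimensional ℝ E]
    (b : Module.Basis ι ℝ E) {K : Set E} (hK : IsCompact K) (hKi : (interior K).Nonempty) :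
    ∃ T : E ≃ᵃ[ℝ] E, 0 ∈ T '' K ∧ (∀ i, b i ∈ T '' K) ∧
      ∀ y ∈ T '' K, ∀ i, |b.coord i y| ≤ 1 := by
  obtain ⟨v₀, hv₀K, hv₀⟩ := exists_det_simplexEdges_ne_zero b hKi
  have hcont : Continuous fun v : Option ι → E => |b.det (simplexEdges v)| :=
    (b.continuous_det.comp (continuous_pi fun i =>
      (continuous_apply (some i)).sub (continuous_apply none))).abs
  obtain ⟨v, hvK, hmax⟩ := (isCompact_univ_pi fun _ => hK).exists_isMaxOn
    ⟨v₀, fun j _ => hv₀K j⟩ hcont.continuousOn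
  replace hvK : ∀ j, v j ∈ K := fun j => hvK j (mem_univ j)
  have hdet : b.det (simplexEdges v) ≠ 0 := fun h0 => hv₀ <| abs_eq_zero.1 <|
    le_antisymm (by simpa [h0] using hmax (fun j _ => hv₀K j)) (abs_nonneg _)
  obtain ⟨hli, hsp⟩ := b.is_basis_iff_det.2 (isUnit_iff_ne_zero.2 hdet)
  set B := Module.Basis.mk hli hsp.ge
  have hBv : ⇑B = simplexEdges v := Module.Basis.coe_mk _ _
  set T : E ≃ᵃ[ℝ] E :=
    (AffineEquiv.vaddConst ℝ (v none)).symm.trans (B.repr.trans b.repr.symm).toAffineEquiv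
  have hT : ∀ x i, b.coord i (T x) = B.coord i (x - v none) := fun x i => by simp [T]
  refine ⟨T, ⟨v none, hvK none, by simp [T]⟩, fun i => ⟨v (some i), hvK (some i), ?_⟩,
    ?_⟩
  · have : v (some i) - v none = B i := by rw [hBv]; rfl
    simp [T, this]
  · rintro _ ⟨x, hx, rfl⟩ i
    have hle : |b.det (simplexEdges (Function.update v (some i) x))| ≤
        |b.det (simplexEdges v)| := hmax fun j _ => by
      rcases eq_or_ne j (some i) with rfl | hj
      · simpa using hx
      · simpa [hj] using hvK j
    rw [simplexEdges_update_some, ← hBv, b.det_update_self, abs_mul, hBv] at hle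
    rw [hT]
    exact (mul_le_iff_le_one_right (abs_pos.2 hdet)).1 hle

end MaxVolumeSimplex

namespace Kn

open MeasureTheory

variable {n : ℕ}

theorem convex (K : Kn n) : Convex ℝ K.toSet := K.1.convex

theorem isCompact (K : Kn n) : IsCompact K.toSet := K.1.isCompact

theorem nonempty (K : Kn n) : K.toSet.Nonempty := K.1.nonempty

theorem measurableSet (K : Kn n) : MeasurableSet K.toSet := K.isCompact.isClosed.measurableSet

theorem volume_ne_zero (K : Kn n) : volume K.toSet ≠ 0 :=
  (Measure.measure_pos_of_nonempty_interior volume K.2).ne'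

theorem hausdorffEDist_ne_top (K L : Kn n) : hausdorffEDist K.toSet L.toSet ≠ ⊤ :=
  ConvexBody.hausdorffEDist_ne_top

theorem toSet_injective : Function.Injective (toSet (n := n)) :=
  fun _ _ h => Subtype.ext (ConvexBody.ext h)

theorem centroid_mem_interior (K : Kn n) : centroid K.toSet ∈ interior K.toSet :=
  K.convex.centroid_mem_interior K.isCompact K.2

theorem centroid_mem (K : Kn n) : centroid K.toSet ∈ K.toSet :=
  interior_subset K.centroid_mem_interior

theorem eventually_ball_subset {L : Kn n} {x : EucSp n} (hx : x ∈ interior L.toSet) :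
    ∃ r > 0, ∀ᶠ p : EucSp n × Kn n in 𝓝 (x, L), ball p.1 r ⊆ p.2.toSet := by
  obtain ⟨δ, hδ, hxL⟩ := Metric.isOpen_iff.1 isOpen_interior x hx
  refine ⟨δ / 3, by positivity, ?_⟩
  filter_upwards [prod_mem_nhds (ball_mem_nhds x (by positivity : 0 < δ / 3))
    (ball_mem_nhds L (by positivity : 0 < δ / 3))] with ⟨y, K⟩ ⟨hy, hK⟩
  have hLK : ball x (δ - δ / 3) ⊆ K.toSet :=
    ball_subset_of_hausdorffDist_le K.convex K.isCompact.isClosed K.nonempty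
      (hausdorffEDist_ne_top L K) (by rw [hausdorffDist_comm]; exact (mem_ball.1 hK).le)
      (hxL.trans interior_subset)
  exact (ball_subset_ball' (by linarith [mem_ball.1 hy])).trans hLK

theorem eventually_mem {L : Kn n} {x : EucSp n} (hx : x ∈ interior L.toSet) :
    ∀ᶠ K in 𝓝 L, x ∈ K.toSet := by
  obtain ⟨r, hr, hev⟩ := eventually_ball_subset hx
  exact (tendsto_const_nhds.prodMk_nhds tendsto_id |>.eventually hev).mono
    fun K hK => hK (mem_ball_self hr)

theorem eventually_notMem {L : Kn n} {x : EucSp n} (hx : x ∉ L.toSet) :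
    ∀ᶠ K in 𝓝 L, x ∉ K.toSet := by
  have hd : 0 < infDist x L.toSet :=
    (L.isCompact.isClosed.notMem_iff_infDist_pos L.nonempty).1 hx
  filter_upwards [ball_mem_nhds L hd] with K hK hxK
  exact (infDist_le_hausdorffDist_of_mem hxK (hausdorffEDist_ne_top K L)).not_gt hK

theorem eventually_subset_closedBall (L : Kn n) :
    ∃ R, ∀ᶠ K in 𝓝 L, K.toSet ⊆ closedBall 0 R := by
  obtain ⟨R, hR⟩ := L.isCompact.isBounded.subset_closedBall 0
  refine ⟨R + 1, ?_⟩
  filter_upwards [ball_mem_nhds L one_pos] with K hK x hx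
  obtain ⟨y, hyL, hxy⟩ := exists_dist_lt_of_hausdorffDist_lt hx hK (hausdorffEDist_ne_top K L)
  have hy := hR hyL
  rw [mem_closedBall] at hy ⊢
  linarith [dist_triangle x y 0]

/-- Indicators converge off the boundary of the limit body, which is Lebesgue-null. -/
theorem ae_tendsto_indicator {F : Type*} [Zero F] [TopologicalSpace F] (L : Kn n)
    (f : EucSp n → F) :
    ∀ᵐ x, Tendsto (fun K : Kn n => K.toSet.indicator f x) (𝓝 L)
      (𝓝 (L.toSet.indicator f x)) := by
  have hnull : ∀ᵐ x : EucSp n, x ∉ frontier L.toSet :=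
    measure_eq_zero_iff_ae_notMem.1 (L.convex.addHaar_frontier volume)
  filter_upwards [hnull] with x hx
  by_cases hxL : x ∈ L.toSet
  · have hxi : x ∈ interior L.toSet := by
      by_contra h
      exact hx ⟨subset_closure hxL, h⟩
    refine tendsto_const_nhds.congr' ?_
    filter_upwards [eventually_mem hxi] with K hK
    rw [indicator_of_mem hK, indicator_of_mem hxL]
  · refine tendsto_const_nhds.congr' ?_
    filter_upwards [eventually_notMem hxL] with K hK
    rw [indicator_of_notMem hK, indicator_of_notMem hxL]

theorem continuous_setIntegral {F : Type*} [NormedAddCommGroup F] [NormedSpace ℝ F]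
    {f : EucSp n → F} (hf : Continuous f) : Continuous fun K : Kn n => ∫ x in K.toSet, f x := by
  refine continuous_iff_continuousAt.2 fun L => ?_
  obtain ⟨R, hR⟩ := eventually_subset_closedBall L
  simp_rw [ContinuousAt, ← integral_indicator (measurableSet _)]
  refine tendsto_integral_filter_of_dominated_convergence
    ((closedBall 0 R).indicator fun x => ‖f x‖)
    (Eventually.of_forall fun K => hf.aestronglyMeasurable.indicator K.measurableSet) ?_
    ((hf.norm.continuousOn.integrableOn_compact (isCompact_closedBall 0 R)).integrable_indicator
      measurableSet_closedBall) (ae_tendsto_indicator L f)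
  filter_upwards [hR] with K hK
  refine ae_of_all _ fun x => ?_
  rw [norm_indicator_eq_indicator_norm]
  exact indicator_le_indicator_of_subset hK (fun _ => norm_nonneg _) x

theorem continuous_centroid : Continuous fun K : Kn n => centroid K.toSet := by
  have hvol : Continuous fun K : Kn n => volume.real K.toSet := by
    simpa using continuous_setIntegral (n := n) (f := fun _ => (1 : ℝ)) continuous_const
  have hvol0 : ∀ K : Kn n, volume.real K.toSet ≠ 0 := fun K =>
    ENNReal.toReal_ne_zero.2 ⟨K.volume_ne_zero, K.isCompact.measure_ne_top⟩
  exact (hvol.inv₀ hvol0).smul (continuous_setIntegral continuous_id)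

end Kn

section AffineInvariance

variable {n : ℕ}

theorem affImage_toSet (T : EucSp n ≃ᵃ[ℝ] EucSp n) (K : Kn n) :
    (affImage T K).toSet = T '' K.toSet := rfl

theorem affImage_symm_affImage (T : EucSp n ≃ᵃ[ℝ] EucSp n) (K : Kn n) :
    affImage T.symm (affImage T K) = K :=
  Kn.toSet_injective <| by simp [affImage_toSet, image_image]

theorem centroid_affImage (T : EucSp n ≃ᵃ[ℝ] EucSp n) (K : Kn n) :
    centroid (affImage T K).toSet = T (centroid K.toSet) :=
  centroid_image_affineEquiv T K.measurableSet K.volume_ne_zero K.isCompact.measure_ne_top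
    (continuous_id.continuousOn.integrableOn_compact K.isCompact)

def centered (S : Set (EucSp n)) : Set (EucSp n) := (fun x => x - centroid S) '' S

theorem centered_affImage (T : EucSp n ≃ᵃ[ℝ] EucSp n) (K : Kn n) :
    centered (affImage T K).toSet = T.linear '' centered K.toSet := by
  rw [centered, centered, centroid_affImage, affImage_toSet, image_image, image_image]
  refine image_congr fun x _ => ?_
  simpa using (T.toAffineMap.linearMap_vsub x (centroid K.toSet)).symm

theorem smul_centered_subset_affImage {A : Kn n → Kn n}
    (hA : ∀ (T : EucSp n ≃ᵃ[ℝ] EucSp n) (K : Kn n), A (affImage T K) = affImage T (A K))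
    {c : ℝ} {K : Kn n} (hK : c • centered K.toSet ⊆ centered (A K).toSet)
    (T : EucSp n ≃ᵃ[ℝ] EucSp n) :
    c • centered (affImage T K).toSet ⊆ centered (A (affImage T K)).toSet := by
  rw [hA, centered_affImage, centered_affImage, ← image_smul_comm _ _ _ fun x => map_smul _ c x]
  exact image_mono hK

end AffineInvariance

section Normalization

open TopologicalSpace

variable {n : ℕ}

def unitCube (n : ℕ) : Set (EucSp n) := {x | ∀ i, |x i| ≤ 1}

def cornerSimplex (n : ℕ) : Set (EucSp n) :=
  convexHull ℝ (insert 0 (range (EuclideanSpace.basisFun (Fin n) ℝ)))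

def IsNormalized (K : Kn n) : Prop := cornerSimplex n ⊆ K.toSet ∧ K.toSet ⊆ unitCube n

theorem isCompact_unitCube : IsCompact (unitCube n) := by
  have h := (EuclideanSpace.equiv (Fin n) ℝ).toHomeomorph.isCompact_preimage.2
    (isCompact_univ_pi fun _ => isCompact_Icc (a := (-1 : ℝ)) (b := 1))
  convert h using 1
  ext x
  simp [unitCube, abs_le, Pi.le_def, forall_and]

theorem interior_cornerSimplex_nonempty : (interior (cornerSimplex n)).Nonempty := by
  refine interior_convexHull_nonempty_iff_affineSpan_eq_top.2 (SetLike.coe_injective ?_)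
  have := (EuclideanSpace.basisFun (Fin n) ℝ).toBasis.span_eq
  rw [OrthonormalBasis.coe_toBasis] at this
  rw [affineSpan_insert_zero, this]
  rfl

theorem Kn.exists_affImage_isNormalized (K : Kn n) : ∃ T, IsNormalized (affImage T K) := by
  obtain ⟨T, h0, hb, hcoord⟩ :=
    exists_affineEquiv_image_abs_coord_le_one (EuclideanSpace.basisFun (Fin n) ℝ).toBasis
      K.isCompact K.2
  refine ⟨T, convexHull_min (insert_subset h0 (range_subset_iff.2 fun i => by
    simpa only [OrthonormalBasis.coe_toBasis, affImage_toSet] using hb i)) (affImage T K).convex,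
    fun y hy i => ?_⟩
  simpa using hcoord y hy i

def Kn.toNonemptyCompacts (K : Kn n) : NonemptyCompacts (EucSp n) :=
  ⟨⟨K.toSet, K.isCompact⟩, K.nonempty⟩

theorem Kn.isometry_toNonemptyCompacts : Isometry (Kn.toNonemptyCompacts (n := n)) :=
  Isometry.of_dist_eq fun _ _ => NonemptyCompacts.dist_eq

theorem Kn.isCompact_setOf_isNormalized : IsCompact {K : Kn n | IsNormalized K} := by
  set S : Set (NonemptyCompacts (EucSp n)) :=
    {L | Convex ℝ (L : Set (EucSp n))} ∩ {L | cornerSimplex n ⊆ L} ∩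
      {L | (L : Set (EucSp n)) ⊆ unitCube n}
  have hcorner : IsClosed {L : NonemptyCompacts (EucSp n) | cornerSimplex n ⊆ L} := by
    have : {L : NonemptyCompacts (EucSp n) | cornerSimplex n ⊆ L} =
        ⋂ x ∈ cornerSimplex n, {L : NonemptyCompacts _ | ((L : Set _) ∩ {x}).Nonempty} := by
      ext L; simp [subset_def]
    rw [this]
    exact isClosed_biInter fun x _ =>
      NonemptyCompacts.isClosed_inter_nonempty_of_isClosed isClosed_singleton
  have hS : IsCompact S :=
    (NonemptyCompacts.isCompact_subsets_of_isCompact isCompact_unitCube).inter_left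
      (NonemptyCompacts.isClosed_setOf_convex.inter hcorner)
  have hrange : S ⊆ range Kn.toNonemptyCompacts := fun L ⟨⟨hconv, hsimp⟩, _⟩ =>
    ⟨⟨⟨L, hconv, L.isCompact, L.nonempty⟩,
      interior_cornerSimplex_nonempty.mono (interior_mono hsimp)⟩, rfl⟩
  convert Kn.isometry_toNonemptyCompacts.isEmbedding.isInducing.isCompact_preimage' hS hrange
    using 1
  ext K
  simp [S, IsNormalized, Kn.toNonemptyCompacts, K.convex]

end Normalization

section UniformInradius

variable {n : ℕ}

theorem exists_ball_subset_of_isCompact {X : Type*} [TopologicalSpace X] {S : Set X}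
    (hS : IsCompact S) {F : X → EucSp n × Kn n} (hF : Continuous F)
    (hmem : ∀ x ∈ S, (F x).1 ∈ interior (F x).2.toSet) :
    ∃ r > 0, ∀ x ∈ S, ball (F x).1 r ⊆ (F x).2.toSet := by
  refine hS.induction_on (p := fun t => ∃ r > 0, ∀ x ∈ t, ball (F x).1 r ⊆ (F x).2.toSet)
    ⟨1, one_pos, by simp⟩
    (fun s t hst ⟨r, hr, ht⟩ => ⟨r, hr, fun x hx => ht x (hst hx)⟩)
    (fun s t ⟨r, hr, hs⟩ ⟨r', hr', ht⟩ => ⟨min r r', lt_min hr hr', fun x hx => ?_⟩)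
    fun x hx => ?_
  · rcases hx with hx | hx
    · exact (ball_subset_ball (min_le_left r r')).trans (hs x hx)
    · exact (ball_subset_ball (min_le_right r r')).trans (ht x hx)
  · obtain ⟨r, hr, hev⟩ := Kn.eventually_ball_subset (hmem x hx)
    exact ⟨_, mem_nhdsWithin_of_mem_nhds (hF.continuousAt.eventually hev), r, hr,
      fun y hy => hy⟩

theorem smul_centered_subset_of_ball_subset {S T : Set (EucSp n)} {R r c : ℝ}
    (hS : S ⊆ closedBall 0 R) (hgS : centroid S ∈ S) (hT : ball (centroid T) r ⊆ T)
    (hc : 0 ≤ c) (hcr : c * (2 * R) < r) : c • centered S ⊆ centered T := by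
  rintro _ ⟨_, ⟨x, hx, rfl⟩, rfl⟩
  have hdist : ‖x - centroid S‖ ≤ 2 * R := by
    have h1 := mem_closedBall_zero_iff.1 (hS hx)
    have h2 := mem_closedBall_zero_iff.1 (hS hgS)
    linarith [norm_sub_le x (centroid S)]
  refine ⟨centroid T + c • (x - centroid S), hT ?_, by simp⟩
  rw [mem_ball, dist_eq_norm, add_sub_cancel_left, norm_smul, Real.norm_of_nonneg hc]
  exact (mul_le_mul_of_nonneg_left hdist hc).trans_lt hcr

theorem exists_smul_centered_subset_of_isNormalized {A : Kn n → Kn n} (hA : Continuous A) :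
    ∃ c : ℝ, 0 < c ∧
      ∀ K, IsNormalized K → c • centered K.toSet ⊆ centered (A K).toSet := by
  obtain ⟨r, hr, hball⟩ := exists_ball_subset_of_isCompact Kn.isCompact_setOf_isNormalized
    (F := fun K => (centroid (A K).toSet, A K)) ((Kn.continuous_centroid.comp hA).prodMk hA)
    fun K _ => (A K).centroid_mem_interior
  obtain ⟨R, hR, hcube⟩ := isCompact_unitCube.isBounded.subset_closedBall_lt 0 (0 : EucSp n)
  refine ⟨r / (4 * R), by positivity, fun K hK => smul_centered_subset_of_ball_subset
    (hK.2.trans hcube) K.centroid_mem (hball K hK) (by positivity) ?_⟩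
  field_simp
  linarith

end UniformInradius

/-- For every affine invariant set mapping `A` there is `c > 0` such that
`c (K − g(K)) ⊆ A(K) − g(A(K))` for every `K ∈ 𝒦ₙ`. -/
theorem statement8 (n : ℕ) (A : Kn n → Kn n) (hA : IsAffineInvariantSetMap A) :
    ∃ c : ℝ, 0 < c ∧ ∀ K : Kn n,
      c • ((fun x => x - centroid K.toSet) '' K.toSet) ⊆
        (fun x => x - centroid (A K).toSet) '' (A K).toSet := by
  obtain ⟨c, hc, hnormalized⟩ := exists_smul_centered_subset_of_isNormalized hA.1
  refine ⟨c, hc, fun K => ?_⟩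
  obtain ⟨T, hT⟩ := K.exists_affImage_isNormalized
  have h := smul_centered_subset_affImage hA.2 (hnormalized _ hT) T.symm
  rwa [affImage_symm_affImage] at h
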